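/- arXiv:1611.08415 — 2 statements merged into one kernel-verified Lean document; each statement's English description precedes it below -/
import Mathlib

section
/- For every natural number n > 2, every subgroup of SO(3) isomorphic to the dihedral group of order 2n is conjugate in SO(3) to the standard dihedral subgroup D_{2n}; that is, for each n > 2 there is exactly one conjugacy class of dihedral subgroups of order 2n in SO(3). -/
noncomputable section

/-- `SO(3)`: the special orthogonal group of `3 × 3` real matrices. -/
abbrev SO3 := Matrix.specialOrthogonalGroup (Fin 3) ℝ

noncomputable instance : Group SO3 :=
  { (inferInstance : Monoid SO3) with
    inv := fun A => ⟨star A.1, by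
      rw [Matrix.mem_specialOrthogonalGroup_iff]
      refine ⟨Unitary.star_mem A.2.1, ?_⟩
      have h : (A.1).det = 1 := A.2.2
      rw [Matrix.star_eq_conjTranspose, Matrix.det_conjTranspose, h, star_one]⟩
    inv_mul_cancel := fun A => Subtype.ext A.2.1.1 }

open Real in
/-- The matrix of the rotation by `θ` about the z-axis. -/
def RzMat (θ : ℝ) : Matrix (Fin 3) (Fin 3) ℝ :=
  !![cos θ, -sin θ, 0;
     sin θ,  cos θ, 0;
     0, 0, 1]

lemma RzMat_mem (θ : ℝ) : RzMat θ ∈ Matrix.specialOrthogonalGroup (Fin 3) ℝ := by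
  rw [Matrix.mem_specialOrthogonalGroup_iff]
  constructor
  · rw [Matrix.mem_orthogonalGroup_iff]
    ext i j
    fin_cases i <;> fin_cases j <;>
      simp [RzMat, Matrix.mul_apply, Fin.sum_univ_succ, Matrix.star_eq_conjTranspose,
        Matrix.conjTranspose_apply, Matrix.vecHead, Matrix.vecTail] <;>
      nlinarith [Real.sin_sq_add_cos_sq θ]
  · simp [RzMat, Matrix.det_fin_three]
    nlinarith [Real.sin_sq_add_cos_sq θ]

/-- The rotation by `θ` about the z-axis, as an element of SO(3). -/
def Rz (θ : ℝ) : SO3 := ⟨RzMat θ, RzMat_mem θ⟩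

/-- The matrix `diag (1, -1, -1)`. -/
def rhoMat : Matrix (Fin 3) (Fin 3) ℝ := !![1,0,0; 0,-1,0; 0,0,-1]

lemma rhoMat_mem : rhoMat ∈ Matrix.specialOrthogonalGroup (Fin 3) ℝ := by
  rw [Matrix.mem_specialOrthogonalGroup_iff]
  constructor
  · rw [Matrix.mem_orthogonalGroup_iff]
    ext i j
    fin_cases i <;> fin_cases j <;>
      simp [rhoMat, Matrix.mul_apply, Fin.sum_univ_succ, Matrix.star_eq_conjTranspose,
        Matrix.conjTranspose_apply, Matrix.vecHead, Matrix.vecTail]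
  · simp [rhoMat, Matrix.det_fin_three]

/-- `ρ = diag (1, -1, -1)`, the rotation by `π` about the x-axis, as an element of SO(3). -/
def ρ : SO3 := ⟨rhoMat, rhoMat_mem⟩

lemma Rz_add (a b : ℝ) : Rz a * Rz b = Rz (a + b) := by
  apply Subtype.ext
  show RzMat a * RzMat b = RzMat (a + b)
  ext i j
  fin_cases i <;> fin_cases j <;>
    simp [RzMat, Matrix.mul_apply, Fin.sum_univ_succ, Matrix.vecHead, Matrix.vecTail,
      Real.cos_add, Real.sin_add] <;> ring

lemma Rz_zero : Rz 0 = 1 := by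
  apply Subtype.ext
  show RzMat 0 = 1
  ext i j
  fin_cases i <;> fin_cases j <;>
    simp [RzMat, Matrix.one_apply, Matrix.vecHead, Matrix.vecTail]

lemma rho_sq : ρ * ρ = 1 := by
  apply Subtype.ext
  show rhoMat * rhoMat = 1
  ext i j
  fin_cases i <;> fin_cases j <;>
    simp [rhoMat, Matrix.mul_apply, Fin.sum_univ_succ, Matrix.one_apply,
      Matrix.vecHead, Matrix.vecTail]

lemma Rz_rho (θ : ℝ) : Rz θ * ρ = ρ * Rz (-θ) := by
  apply Subtype.ext
  show RzMat θ * rhoMat = rhoMat * RzMat (-θ)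
  ext i j
  fin_cases i <;> fin_cases j <;>
    simp [RzMat, rhoMat, Matrix.mul_apply, Fin.sum_univ_succ,
      Matrix.vecHead, Matrix.vecTail]

lemma Rz_inv (θ : ℝ) : (Rz θ)⁻¹ = Rz (-θ) := by
  symm
  rw [eq_inv_iff_mul_eq_one, Rz_add]
  simpa using Rz_zero

lemma rho_inv : ρ⁻¹ = ρ := inv_eq_of_mul_eq_one_right rho_sq
/-- The standard dihedral subgroup `D_{2n} ⊆ SO(3)` of order `2n`,
generated by `Rz (2π/n)` and `ρ`. -/
def D2n (n : ℕ) : Subgroup SO3 := Subgroup.closure {Rz (2 * Real.pi / n), ρ}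

-- ===== auxiliary lemmas =====

lemma Rz_pow (θ : ℝ) (m : ℕ) : Rz θ ^ m = Rz (m * θ) := by
  induction m with
  | zero => simpa using Rz_zero.symm
  | succ k ih =>
    rw [pow_succ, ih, Rz_add]
    congr 1
    push_cast; ring

lemma Rz_zpow (θ : ℝ) (m : ℤ) : Rz θ ^ m = Rz (m * θ) := by
  cases m with
  | ofNat k => simpa using Rz_pow θ k
  | negSucc k =>
    rw [zpow_negSucc, Rz_pow, Rz_inv]
    congr 1
    push_cast; ring

lemma Rz_eq_one_of (θ : ℝ) (h1 : Real.cos θ = 1) (h2 : Real.sin θ = 0) : Rz θ = 1 := by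
  apply Subtype.ext
  show RzMat θ = 1
  ext i j
  fin_cases i <;> fin_cases j <;>
    simp [RzMat, h1, h2, Matrix.one_apply, Matrix.vecHead, Matrix.vecTail]

lemma Rz_int_two_pi (k : ℤ) : Rz ((k : ℝ) * (2 * Real.pi)) = 1 := by
  apply Rz_eq_one_of
  · exact Real.cos_int_mul_two_pi k
  · have := Real.sin_int_mul_pi (2 * k)
    push_cast at this
    rw [show (k : ℝ) * (2 * Real.pi) = 2 * (k:ℝ) * Real.pi by ring]
    exact this

lemma Rz_one_entries (θ : ℝ) (h : Rz θ = 1) : Real.cos θ = 1 := by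
  have h' : RzMat θ = 1 := congrArg Subtype.val h
  have := congrFun (congrFun h' 0) 0
  simpa [RzMat, Matrix.one_apply] using this

lemma exists_cos_sin {a b : ℝ} (h : a ^ 2 + b ^ 2 = 1) :
    ∃ θ : ℝ, Real.cos θ = a ∧ Real.sin θ = b := by
  have ha1 : -1 ≤ a := by nlinarith
  have ha2 : a ≤ 1 := by nlinarith
  have hs : Real.sin (Real.arccos a) = Real.sqrt (1 - a ^ 2) := Real.sin_arccos a
  have habs : Real.sqrt (1 - a ^ 2) = |b| := by
    rw [show (1 : ℝ) - a ^ 2 = b ^ 2 by linarith, Real.sqrt_sq_eq_abs]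
  rcases le_or_gt 0 b with hb | hb
  · exact ⟨Real.arccos a, Real.cos_arccos ha1 ha2, by rw [hs, habs, abs_of_nonneg hb]⟩
  · refine ⟨-Real.arccos a, ?_, ?_⟩
    · rw [Real.cos_neg]; exact Real.cos_arccos ha1 ha2
    · rw [Real.sin_neg, hs, habs, abs_of_neg hb, neg_neg]

lemma so3_star_eq_transpose {A : Matrix (Fin 3) (Fin 3) ℝ} : star A = A.transpose := by
  ext i j; simp [Matrix.star_apply]

lemma so3_det_sub_one {A : Matrix (Fin 3) (Fin 3) ℝ}
    (hA : A ∈ Matrix.specialOrthogonalGroup (Fin 3) ℝ) : (A - 1).det = 0 := by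
  rw [Matrix.mem_specialOrthogonalGroup_iff] at hA
  obtain ⟨ho, hdet⟩ := hA
  rw [Matrix.mem_orthogonalGroup_iff'] at ho
  have h1 : (A - 1).det = (star A * (A - 1)).det := by
    rw [Matrix.det_mul, so3_star_eq_transpose, Matrix.det_transpose, hdet, one_mul]
  have h2 : star A * (A - 1) = 1 - star A := by
    rw [mul_sub, so3_star_eq_transpose, ho, mul_one]
  have h3 : (1 - star A).det = (1 - A).det := by
    rw [so3_star_eq_transpose, show (1 : Matrix (Fin 3) (Fin 3) ℝ) - A.transpose
      = (1 - A).transpose by rw [Matrix.transpose_sub, Matrix.transpose_one],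
      Matrix.det_transpose]
  have h4 : (1 - A) = -(A - 1) := (neg_sub A 1).symm
  have h5 : (-(A - 1)).det = -(A - 1).det := by
    rw [show (-(A-1) : Matrix (Fin 3) (Fin 3) ℝ) = (-1 : ℝ) • (A - 1) by
      simp [neg_smul, one_smul], Matrix.det_smul]
    norm_num
  have : (A - 1).det = -(A - 1).det := by
    calc (A - 1).det = (1 - A).det := by rw [h1, h2, h3]
    _ = -(A - 1).det := by rw [h4, h5]
  linarith

/-- Every element of SO(3) has a unit fixed vector. -/
lemma so3_exists_unit_fixed {A : Matrix (Fin 3) (Fin 3) ℝ}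
    (hA : A ∈ Matrix.specialOrthogonalGroup (Fin 3) ℝ) :
    ∃ v : Fin 3 → ℝ, v 0 ^ 2 + v 1 ^ 2 + v 2 ^ 2 = 1 ∧ A.mulVec v = v := by
  have hdet := so3_det_sub_one hA
  obtain ⟨w, hw0, hw⟩ := (Matrix.exists_mulVec_eq_zero_iff).2 hdet
  have hfix : A.mulVec w = w := by
    have := hw
    rw [Matrix.sub_mulVec, Matrix.one_mulVec, sub_eq_zero] at this
    exact this
  set c2 : ℝ := w 0 ^ 2 + w 1 ^ 2 + w 2 ^ 2 with hc2
  have hc2pos : 0 < c2 := by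
    have hex : ∃ i, w i ≠ 0 := by
      by_contra hall
      push_neg at hall
      exact hw0 (funext hall)
    obtain ⟨i, hi⟩ := hex
    fin_cases i <;> · simp only [hc2]; positivity
  set c : ℝ := Real.sqrt c2 with hc
  have hcpos : 0 < c := Real.sqrt_pos.2 hc2pos
  refine ⟨c⁻¹ • w, ?_, ?_⟩
  · have hcsq : c ^ 2 = c2 := Real.sq_sqrt hc2pos.le
    have : (c⁻¹ • w) 0 ^ 2 + (c⁻¹ • w) 1 ^ 2 + (c⁻¹ • w) 2 ^ 2 = c⁻¹ ^ 2 * c2 := by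
      simp [Pi.smul_apply, smul_eq_mul, hc2]; ring
    rw [this, ← hcsq]
    field_simp
  · rw [Matrix.mulVec_smul, hfix]

open Matrix in
/-- Any unit vector is the third column of some element of SO(3). -/
lemma exists_so3_col (v : Fin 3 → ℝ) (hv : v 0 ^ 2 + v 1 ^ 2 + v 2 ^ 2 = 1) :
    ∃ P : SO3, ∀ i, P.1 i 2 = v i := by
  classical
  let v' : EuclideanSpace ℝ (Fin 3) := WithLp.toLp 2 v
  have hcard : Module.finrank ℝ (EuclideanSpace ℝ (Fin 3)) = Fintype.card (Fin 3) := by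
    simp
  have horth : Orthonormal ℝ (Set.restrict {(2 : Fin 3)} (fun _ : Fin 3 => v')) := by
    rw [orthonormal_iff_ite]
    rintro ⟨i, hi⟩ ⟨j, hj⟩
    have : i = j := by
      simp only [Set.mem_singleton_iff] at hi hj; rw [hi, hj]
    simp only [Subtype.mk.injEq, this, if_pos rfl, Set.restrict_apply]
    change inner ℝ v' v' = _
    rw [show (inner (𝕜 := ℝ) v' v') = ∑ k, v k * v k by
      simp only [v', PiLp.inner_apply, WithLp.ofLp_toLp, RCLike.inner_apply, conj_trivial]]
    rw [Fin.sum_univ_three]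
    simp only [if_true]
    nlinarith [hv]
  obtain ⟨b, hb⟩ := horth.exists_orthonormalBasis_extension_of_card_eq hcard
  have hb2 : ∀ k, (b 2) k = v k := by
    intro k
    rw [hb 2 (Set.mem_singleton _)]
  -- the matrix with columns `b 0, b 1, b 2`
  let Q : Matrix (Fin 3) (Fin 3) ℝ := Matrix.of fun i j => (b j) i
  have hQorth : star Q * Q = 1 := by
    ext i j
    have hinner := (orthonormal_iff_ite (𝕜 := ℝ)).1 b.orthonormal i j
    rw [show (inner (𝕜 := ℝ) (b i) (b j)) = ∑ k, (b i) k * (b j) k by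
      simp [PiLp.inner_apply, RCLike.inner_apply]
      exact Finset.sum_congr rfl fun _ _ => mul_comm _ _] at hinner
    rw [Matrix.mul_apply]
    simp only [Matrix.star_apply, star_trivial]
    have heq : ∑ x, Q x i * Q x j = ∑ k, (b i) k * (b j) k := rfl
    rw [heq, hinner]
    simp [Matrix.one_apply]
  have hQdet : Q.det = 1 ∨ Q.det = -1 := by
    have : Q.det * Q.det = 1 := by
      have h := congrArg Matrix.det hQorth
      rwa [Matrix.det_mul, so3_star_eq_transpose, Matrix.det_transpose, Matrix.det_one] at h
    rcases mul_self_eq_one_iff.1 this with h | h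
    · exact Or.inl h
    · exact Or.inr h
  rcases hQdet with h | h
  · refine ⟨⟨Q, ?_⟩, fun i => hb2 i⟩
    rw [Matrix.mem_specialOrthogonalGroup_iff]
    refine ⟨?_, h⟩
    rw [Matrix.mem_orthogonalGroup_iff']
    exact hQorth
  · -- flip the first column
    let d : Matrix (Fin 3) (Fin 3) ℝ := Matrix.diagonal ![-1, 1, 1]
    have hdd : d * d = 1 := by
      rw [Matrix.diagonal_mul_diagonal]
      ext i j
      fin_cases i <;> fin_cases j <;> simp [Matrix.diagonal, Matrix.one_apply]
    have hdt : star d = d := by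
      rw [so3_star_eq_transpose, Matrix.diagonal_transpose]
    have hddet : d.det = -1 := by
      rw [Matrix.det_diagonal, Fin.prod_univ_three]
      norm_num; rfl
    refine ⟨⟨Q * d, ?_⟩, fun i => ?_⟩
    · rw [Matrix.mem_specialOrthogonalGroup_iff]
      constructor
      · rw [Matrix.mem_orthogonalGroup_iff']
        rw [← so3_star_eq_transpose, Matrix.star_mul, hdt, mul_assoc, ← mul_assoc (star Q), hQorth, one_mul, hdd]
      · rw [Matrix.det_mul, h, hddet]; norm_num
    · show (Q * d) i 2 = v i
      rw [Matrix.mul_diagonal]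
      have h2 : (![-1, 1, 1] : Fin 3 → ℝ) 2 = 1 := rfl
      rw [h2, mul_one]
      exact hb2 i

/-- An element of SO(3) fixing `e₃` is a rotation about the z-axis. -/
lemma so3_fix_e2_eq_Rz {M : Matrix (Fin 3) (Fin 3) ℝ}
    (hM : M ∈ Matrix.specialOrthogonalGroup (Fin 3) ℝ)
    (hfix : M.mulVec (Pi.single 2 1) = Pi.single 2 1) :
    ∃ θ : ℝ, M = RzMat θ := by
  rw [Matrix.mem_specialOrthogonalGroup_iff] at hM
  obtain ⟨ho, hdet⟩ := hM
  have h1 : star M * M = 1 := (Matrix.mem_orthogonalGroup_iff' _ _).1 ho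
  have h2 : M * star M = 1 := (Matrix.mem_orthogonalGroup_iff _ _).1 ho
  have hcol : ∀ i, M i 2 = (Pi.single 2 1 : Fin 3 → ℝ) i := by
    intro i
    have := congrFun hfix i
    rw [Matrix.mulVec_single] at this
    simpa using this
  have hc0 : M 0 2 = 0 := by simpa [Pi.single_apply] using hcol 0
  have hc1 : M 1 2 = 0 := by simpa [Pi.single_apply] using hcol 1
  have hc2 : M 2 2 = 1 := by simpa [Pi.single_apply] using hcol 2
  have hrow : (M * star M) 2 2 = (1 : Matrix (Fin 3) (Fin 3) ℝ) 2 2 := by rw [h2]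
  rw [Matrix.mul_apply, Fin.sum_univ_three] at hrow
  simp only [Matrix.star_apply, star_trivial, Matrix.one_apply_eq, hc2] at hrow
  have hr0 : M 2 0 = 0 := by nlinarith [sq_nonneg (M 2 0), sq_nonneg (M 2 1)]
  have hr1 : M 2 1 = 0 := by nlinarith [sq_nonneg (M 2 0), sq_nonneg (M 2 1)]
  -- column norms and orthogonality
  have e00 : (star M * M) 0 0 = (1 : Matrix (Fin 3) (Fin 3) ℝ) 0 0 := by rw [h1]
  have e01 : (star M * M) 0 1 = (1 : Matrix (Fin 3) (Fin 3) ℝ) 0 1 := by rw [h1]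
  have e11 : (star M * M) 1 1 = (1 : Matrix (Fin 3) (Fin 3) ℝ) 1 1 := by rw [h1]
  rw [Matrix.mul_apply, Fin.sum_univ_three] at e00 e01 e11
  simp only [Matrix.star_apply, star_trivial, Matrix.one_apply, hr0, hr1] at e00 e01 e11
  norm_num at e00 e01 e11
  -- determinant
  rw [Matrix.det_fin_three] at hdet
  rw [hc0, hc1, hc2, hr0, hr1] at hdet
  ring_nf at hdet
  set a := M 0 0
  set b := M 0 1
  set c := M 1 0
  set d := M 1 1
  have h1' : a * a + c * c = 1 := e00
  have h3' : a * b + c * d = 0 := e01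
  have hdet' : a * d - b * c = 1 := by linarith [hdet]
  have hda : d = a := by linear_combination (-d) * h1' + a * hdet' + c * h3'
  have hbc : b = -c := by linear_combination (-b) * h1' + (-c) * hdet' + a * h3'
  obtain ⟨θ, hcos, hsin⟩ := exists_cos_sin (a := a) (b := c) (by nlinarith)
  refine ⟨θ, ?_⟩
  ext i j
  fin_cases i <;> fin_cases j <;>
    simp [RzMat, hcos, hsin, Matrix.vecHead, Matrix.vecTail] <;>
    first
      | exact hc0 | exact hc1 | exact hc2 | exact hr0 | exact hr1
      | linarith [hda, hbc]

/-- An element of SO(3) that conjugates `Rz θ` to `Rz (-θ)`, where `sin θ ≠ 0`,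
is of the form `Rz ψ * ρ`. -/
lemma so3_reverses_eq_Rz_rho {M : Matrix (Fin 3) (Fin 3) ℝ}
    (hM : M ∈ Matrix.specialOrthogonalGroup (Fin 3) ℝ)
    (hs : Real.sin θ ≠ 0)
    (hcom : M * RzMat θ = RzMat (-θ) * M) :
    ∃ ψ : ℝ, M = RzMat ψ * rhoMat := by
  rw [Matrix.mem_specialOrthogonalGroup_iff] at hM
  obtain ⟨ho, hdet⟩ := hM
  have h1 : star M * M = 1 := (Matrix.mem_orthogonalGroup_iff' _ _).1 ho
  set s := Real.sin θ with hsdef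
  set c := Real.cos θ with hcdef
  have hs2 : 0 < s ^ 2 := lt_of_le_of_ne (sq_nonneg s) (Ne.symm (pow_ne_zero 2 hs))
  have entry : ∀ i j, (M * RzMat θ) i j = (RzMat (-θ) * M) i j := fun i j => by rw [hcom]
  have e02 := entry 0 2
  have e12 := entry 1 2
  have e20 := entry 2 0
  have e21 := entry 2 1
  have e00 := entry 0 0
  have e01 := entry 0 1
  simp [Matrix.mul_apply, Fin.sum_univ_succ, RzMat, Real.cos_neg, Real.sin_neg,
    Matrix.vecHead, Matrix.vecTail] at e02 e12 e20 e21 e00 e01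
  -- column 3 off-diagonal entries vanish
  have k02 : (s ^ 2 + (1 - c) ^ 2) * M 0 2 = 0 := by
    linear_combination (1 - c) * e02 + s * e12
  have h02 : M 0 2 = 0 := by
    rcases mul_eq_zero.1 k02 with h | h
    · exfalso; nlinarith [sq_nonneg (1 - c)]
    · exact h
  have h12 : M 1 2 = 0 := by
    have : s * M 1 2 = 0 := by linear_combination (-1 : ℝ) * e02 + (1 - c) * h02
    rcases mul_eq_zero.1 this with h | h
    · exact absurd h hs
    · exact h
  -- row 3 off-diagonal entries vanish
  have k20 : (s ^ 2 + (1 - c) ^ 2) * M 2 0 = 0 := by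
    linear_combination (c - 1) * e20 - s * e21
  have h20 : M 2 0 = 0 := by
    rcases mul_eq_zero.1 k20 with h | h
    · exfalso; nlinarith [sq_nonneg (1 - c)]
    · exact h
  have h21 : M 2 1 = 0 := by
    have : s * M 2 1 = 0 := by linear_combination e20 + (1 - c) * h20
    rcases mul_eq_zero.1 this with h | h
    · exact absurd h hs
    · exact h
  -- relations among the 2x2 block entries
  have h10 : M 1 0 = M 0 1 := by
    have : s * (M 0 1 - M 1 0) = 0 := by linear_combination e00
    rcases mul_eq_zero.1 this with h | h
    · exact absurd h hs
    · linarith [h]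
  have h11 : M 1 1 = - M 0 0 := by
    have : s * (M 0 0 + M 1 1) = 0 := by linear_combination (-1 : ℝ) * e01
    rcases mul_eq_zero.1 this with h | h
    · exact absurd h hs
    · linarith [h]
  -- column 0 is a unit vector
  have n00 : (star M * M) 0 0 = (1 : Matrix (Fin 3) (Fin 3) ℝ) 0 0 := by rw [h1]
  rw [Matrix.mul_apply, Fin.sum_univ_three] at n00
  simp only [Matrix.star_apply, star_trivial, Matrix.one_apply_eq, h20] at n00
  have hunit : M 0 0 ^ 2 + M 0 1 ^ 2 = 1 := by
    linear_combination n00 - (M 1 0 + M 0 1) * h10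
  -- bottom-right entry
  rw [Matrix.det_fin_three, h02, h12, h20, h21, h10, h11] at hdet
  have h22 : M 2 2 = -1 := by
    linear_combination (-1 : ℝ) * hdet - M 2 2 * hunit
  obtain ⟨ψ, hcos, hsin⟩ := exists_cos_sin hunit
  refine ⟨ψ, ?_⟩
  have hprod : ∀ i j, (RzMat ψ * rhoMat) i j =
      (!![Real.cos ψ, Real.sin ψ, 0; Real.sin ψ, -Real.cos ψ, 0; 0,0,-1] :
        Matrix (Fin 3) (Fin 3) ℝ) i j := by
    intro i j
    fin_cases i <;> fin_cases j <;>
      simp [RzMat, rhoMat, Matrix.mul_apply, Fin.sum_univ_three,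
        Matrix.vecHead, Matrix.vecTail]
  ext i j
  rw [hprod]
  fin_cases i <;> fin_cases j <;>
    simp [hcos, hsin, Matrix.vecHead, Matrix.vecTail] <;>
    first
      | exact h02 | exact h12 | exact h20 | exact h21 | exact h22
      | linarith [h10, h11]

lemma sin_ne_zero_of_orderOf_Rz {n : ℕ} (hn : 2 < n) {θ : ℝ}
    (hord : orderOf (Rz θ) = n) : Real.sin θ ≠ 0 := by
  intro hsin
  have hcos2 : Real.cos θ ^ 2 = 1 := by
    have := Real.sin_sq_add_cos_sq θ
    rw [hsin] at this; nlinarith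
  have hsq : Rz θ ^ 2 = 1 := by
    rw [pow_two, Rz_add]
    apply Rz_eq_one_of
    · rw [show θ + θ = 2 * θ by ring, Real.cos_two_mul]
      nlinarith
    · rw [show θ + θ = 2 * θ by ring, Real.sin_two_mul, hsin]
      ring
  have hdvd : n ∣ 2 := by
    rw [← hord]
    exact orderOf_dvd_of_pow_eq_one hsq
  have := Nat.le_of_dvd (by norm_num) hdvd
  omega

lemma Rz_theta_eq {n : ℕ} (hn : 2 < n) {θ : ℝ} (hord : orderOf (Rz θ) = n) :
    ∃ k : ℤ, θ = (k : ℝ) * (2 * Real.pi) / n ∧ Int.gcd k n = 1 := by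
  have hn0 : (n : ℝ) ≠ 0 := by positivity
  have hpow : Rz θ ^ n = 1 := by rw [← hord]; exact pow_orderOf_eq_one _
  rw [Rz_pow] at hpow
  obtain ⟨k, hk⟩ := (Real.cos_eq_one_iff _).1 (Rz_one_entries _ hpow)
  have hθ : θ = (k : ℝ) * (2 * Real.pi) / n := by
    field_simp
    linarith [hk]
  refine ⟨k, hθ, ?_⟩
  by_contra hg
  set d : ℕ := Int.gcd k n with hd
  have hdnz : (d : ℤ) ∣ (n : ℤ) := Int.gcd_dvd_right k n
  have hdn : d ∣ n := Int.natCast_dvd_natCast.1 hdnz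
  have hdk : (d : ℤ) ∣ k := Int.gcd_dvd_left k n
  have hd0 : d ≠ 0 := by
    intro h0
    have h0' : Int.gcd k (n : ℤ) = 0 := by rw [← hd]; exact h0
    have hzn := (Int.gcd_eq_zero_iff.1 h0').2
    simp at hzn
    omega
  have hd2 : 2 ≤ d := by omega
  obtain ⟨m, hm⟩ := hdn
  obtain ⟨j, hj⟩ := hdk
  have hm0 : m ≠ 0 := by rintro rfl; omega
  have hmn : m < n := by
    nlinarith [hm, hd2, Nat.pos_of_ne_zero hm0]
  have hmθ : (m : ℝ) * θ = (j : ℝ) * (2 * Real.pi) := by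
    have hint : (m : ℤ) * k = (n : ℤ) * j := by
      rw [hj, hm]
      push_cast
      ring
    have hr : (m : ℝ) * k = (n : ℝ) * j := by
      exact_mod_cast congrArg (fun z : ℤ => (z : ℝ)) hint
    rw [hθ]
    field_simp
    linear_combination hr
  have hpm : Rz θ ^ m = 1 := by
    rw [Rz_pow, hmθ]
    exact Rz_int_two_pi j
  have hnd : n ∣ m := hord ▸ orderOf_dvd_of_pow_eq_one hpm
  have := Nat.le_of_dvd (by omega) hnd
  omega

lemma closure_Rz_rho_eq_D2n {n : ℕ} (hn : 2 < n) {k : ℤ}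
    (hg : Int.gcd k n = 1) :
    Subgroup.closure {Rz ((k : ℝ) * (2 * Real.pi) / n), ρ} = D2n n := by
  have hn0 : (n : ℝ) ≠ 0 := by positivity
  set θ : ℝ := (k : ℝ) * (2 * Real.pi) / n with hθ
  have h1 : Rz θ = Rz (2 * Real.pi / n) ^ k := by
    rw [Rz_zpow]
    congr 1
    rw [hθ]; field_simp
  obtain ⟨u, v, huv⟩ : IsCoprime k (n : ℤ) := Int.isCoprime_iff_gcd_eq_one.2 hg
  have h2 : Rz (2 * Real.pi / n) = Rz θ ^ u := by
    rw [Rz_zpow]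
    have harg : (u : ℝ) * θ = 2 * Real.pi / n - (v : ℝ) * (2 * Real.pi) := by
      have : ((u * k + v * n : ℤ) : ℝ) = 1 := by rw [huv]; norm_num
      push_cast at this
      rw [hθ]
      field_simp
      linear_combination this
    rw [harg, show 2 * Real.pi / ↑n - (v : ℝ) * (2 * Real.pi)
        = 2 * Real.pi / ↑n + (-v : ℤ) * (2 * Real.pi) by push_cast; ring,
      ← Rz_add, Rz_int_two_pi, mul_one]
  apply le_antisymm
  · rw [Subgroup.closure_le]
    rintro x (rfl | rfl)
    · rw [h1]
      exact zpow_mem (Subgroup.subset_closure (Set.mem_insert _ _)) k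
    · exact Subgroup.subset_closure (Set.mem_insert_of_mem _ rfl)
  · rw [D2n, Subgroup.closure_le]
    rintro x (rfl | rfl)
    · rw [h2]
      exact zpow_mem (Subgroup.subset_closure (Set.mem_insert _ _)) u
    · exact Subgroup.subset_closure (Set.mem_insert_of_mem _ rfl)

open DihedralGroup in
lemma dihedral_sr_inv (n : ℕ) (i : ZMod n) : (sr i : DihedralGroup n)⁻¹ = sr i :=
  inv_eq_of_mul_eq_one_right (sr_mul_self i)

open DihedralGroup in
lemma dihedral_r_inv (n : ℕ) (i : ZMod n) : (r i : DihedralGroup n)⁻¹ = r (-i) := by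
  apply inv_eq_of_mul_eq_one_right
  rw [r_mul_r, add_neg_cancel, one_def]

open DihedralGroup in
lemma dihedral_rel (n : ℕ) :
    (sr 0 : DihedralGroup n) * r 1 * (sr 0)⁻¹ = (r 1)⁻¹ := by
  rw [dihedral_sr_inv, sr_mul_r, dihedral_r_inv, zero_add, sr_mul_sr, zero_sub]

open DihedralGroup in
lemma dihedral_gen (n : ℕ) [NeZero n] :
    Subgroup.closure {(r 1 : DihedralGroup n), sr 0} = ⊤ := by
  rw [eq_top_iff]
  rintro x -
  have hr : ∀ i : ZMod n, (r i : DihedralGroup n) ∈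
      Subgroup.closure {(r 1 : DihedralGroup n), sr 0} := by
    intro i
    have : (r 1 : DihedralGroup n) ^ (i.val) = r i := by
      rw [r_one_pow]
      congr 1
      exact ZMod.natCast_rightInverse i
    rw [← this]
    exact pow_mem (Subgroup.subset_closure (Set.mem_insert _ _)) _
  cases x with
  | r i => exact hr i
  | sr i =>
    have : (r (-i) : DihedralGroup n) * sr 0 = sr i := by
      rw [r_mul_sr, zero_sub, neg_neg]
    rw [← this]
    exact mul_mem (hr _) (Subgroup.subset_closure (Set.mem_insert_of_mem _ rfl))

/-- For every `n > 2`, every subgroup of `SO(3)` isomorphic to the dihedral group of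
order `2n` is conjugate in `SO(3)` to the standard dihedral subgroup `D_{2n}`;
i.e. for each `n > 2` there is exactly one conjugacy class of dihedral subgroups of
order `2n` in `SO(3)`. -/
theorem dihedral_subgroup_conjugate_to_D2n (n : ℕ) (hn : 2 < n) (H : Subgroup SO3)
    (hiso : Nonempty (H ≃* DihedralGroup n)) :
    ∃ g : SO3, Subgroup.map (MulAut.conj g).toMonoidHom H = D2n n := by
  classical
  haveI : NeZero n := ⟨by omega⟩
  obtain ⟨e⟩ := hiso
  set f : DihedralGroup n →* SO3 := H.subtype.comp e.symm.toMonoidHom with hf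
  set a : SO3 := f (DihedralGroup.r 1) with ha
  set b : SO3 := f (DihedralGroup.sr 0) with hb
  -- `H` is generated by `a` and `b`
  have hmap_top : Subgroup.map f ⊤ = H := by
    ext x
    simp only [Subgroup.mem_map, Subgroup.mem_top, true_and]
    constructor
    · rintro ⟨y, rfl⟩
      exact (e.symm y).2
    · intro hx
      exact ⟨e ⟨x, hx⟩, by simp [hf]⟩
  have hHcl : H = Subgroup.closure {a, b} := by
    rw [← hmap_top, ← dihedral_gen n, MonoidHom.map_closure]
    congr 1
    rw [Set.image_insert_eq, Set.image_singleton, ← ha, ← hb]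
  have hfinj : Function.Injective f := by
    intro x y hxy
    simp only [hf, MonoidHom.comp_apply] at hxy
    exact e.symm.injective (Subtype.ext hxy)
  have horda : orderOf a = n := by
    have h1 := orderOf_injective f hfinj (DihedralGroup.r 1)
    rw [DihedralGroup.orderOf_r_one] at h1
    rw [ha]; exact h1
  have hrel : b * a * b⁻¹ = a⁻¹ := by
    rw [ha, hb, ← f.map_inv, ← f.map_inv, ← f.map_mul, ← f.map_mul]
    exact congrArg f (dihedral_rel n)
  -- conjugate `a` into the standard rotation form
  obtain ⟨v, hv, hfix⟩ := so3_exists_unit_fixed a.2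
  obtain ⟨P, hP⟩ := exists_so3_col v hv
  have hPcol : P.1.mulVec (Pi.single 2 1 : Fin 3 → ℝ) = v := by
    rw [Matrix.mulVec_single]
    funext i
    rw [MulOpposite.op_one, one_smul]
    exact hP i
  have hPO : star P.1 * P.1 = 1 := by
    have h2 := P.2
    rw [Matrix.mem_specialOrthogonalGroup_iff] at h2
    exact (Matrix.mem_orthogonalGroup_iff' _ _).1 h2.1
  set A' : SO3 := P⁻¹ * a * P with hA'
  have hA'fix : A'.1.mulVec (Pi.single 2 1 : Fin 3 → ℝ) = Pi.single 2 1 := by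
    have h1 : A'.1 = star P.1 * a.1 * P.1 := rfl
    rw [h1, mul_assoc, ← Matrix.mulVec_mulVec, ← Matrix.mulVec_mulVec, hPcol, hfix,
      ← hPcol, Matrix.mulVec_mulVec, hPO, Matrix.one_mulVec]
  obtain ⟨θ, hθM⟩ := so3_fix_e2_eq_Rz A'.2 hA'fix
  have A'eq : A' = Rz θ := Subtype.ext hθM
  have horder' : orderOf (Rz θ) = n := by
    rw [← A'eq, hA']
    have key : P⁻¹ * a * P = (MulAut.conj P⁻¹).toMonoidHom a := by
      simp [MulAut.conj_apply]
    rw [key, orderOf_injective (MulAut.conj P⁻¹).toMonoidHom (MulAut.conj P⁻¹).injective]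
    exact horda
  have hsin : Real.sin θ ≠ 0 := sin_ne_zero_of_orderOf_Rz hn horder'
  obtain ⟨k, hθeq, hgcd⟩ := Rz_theta_eq hn horder'
  -- the reflection
  set b' : SO3 := P⁻¹ * b * P with hb'
  have hrel' : b' * A' * b'⁻¹ = A'⁻¹ := by
    rw [hA', hb']
    have expand : (P⁻¹*b*P) * (P⁻¹*a*P) * (P⁻¹*b*P)⁻¹ = P⁻¹ * (b*a*b⁻¹) * P := by group
    have expand2 : ((P⁻¹*a*P)⁻¹ : SO3) = P⁻¹ * a⁻¹ * P := by group
    rw [expand, expand2, hrel]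
  have hswap : b' * A' = A'⁻¹ * b' := by
    have h3 := congrArg (· * b') hrel'
    simpa [mul_assoc] using h3
  rw [A'eq, Rz_inv] at hswap
  have hcomM : b'.1 * RzMat θ = RzMat (-θ) * b'.1 := congrArg Subtype.val hswap
  obtain ⟨ψ, hψM⟩ := so3_reverses_eq_Rz_rho b'.2 hsin hcomM
  have b'eq : b' = Rz ψ * ρ := Subtype.ext hψM
  -- final conjugation
  set w : SO3 := Rz (-(ψ/2)) with hw
  have hinv : w⁻¹ = Rz (ψ/2) := by rw [hw, Rz_inv, neg_neg]
  set g : SO3 := w * P⁻¹ with hg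
  have hga : g * a * g⁻¹ = Rz θ := by
    have h5 : g * a * g⁻¹ = w * (P⁻¹ * a * P) * w⁻¹ := by rw [hg]; group
    rw [h5, ← hA', A'eq, hinv, hw, Rz_add, Rz_add]
    congr 1; ring
  have hrho : ρ * Rz (ψ/2) = Rz (-(ψ/2)) * ρ := by
    have h6 := Rz_rho (-(ψ/2))
    rw [neg_neg] at h6
    exact h6.symm
  have hgb : g * b * g⁻¹ = ρ := by
    have h5 : g * b * g⁻¹ = w * (P⁻¹ * b * P) * w⁻¹ := by rw [hg]; group
    calc g * b * g⁻¹ = w * (P⁻¹ * b * P) * w⁻¹ := h5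
      _ = w * (Rz ψ * ρ) * Rz (ψ/2) := by rw [← hb', b'eq, hinv]
      _ = (w * Rz ψ) * (ρ * Rz (ψ/2)) := by rw [mul_assoc, mul_assoc, mul_assoc]
      _ = Rz (-(ψ/2) + ψ) * (Rz (-(ψ/2)) * ρ) := by rw [hw, Rz_add, hrho]
      _ = ρ := by
          rw [← mul_assoc, Rz_add, show -(ψ/2) + ψ + -(ψ/2) = (0:ℝ) by ring,
            Rz_zero, one_mul]
  refine ⟨g, ?_⟩
  rw [hHcl, MonoidHom.map_closure]
  have himg : ⇑(MulAut.conj g).toMonoidHom '' ({a, b} : Set SO3) = {Rz θ, ρ} := by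
    rw [Set.image_insert_eq, Set.image_singleton]
    have h6 : (MulAut.conj g).toMonoidHom a = Rz θ := by
      simpa [MulAut.conj_apply] using hga
    have h7 : (MulAut.conj g).toMonoidHom b = ρ := by
      simpa [MulAut.conj_apply] using hgb
    rw [h6, h7]
  rw [himg, hθeq]
  exact closure_Rz_rho_eq_D2n hn hgcd

end
end

section
/- The Weyl group of the Klein four subgroup V in SO(3), i.e. the quotient N_{SO(3)}(V)/V of its normaliser by V, has order 6. -/
noncomputable section

/-- A diagonal `3 × 3` matrix. -/
def dMat (a b c : ℝ) : Matrix (Fin 3) (Fin 3) ℝ := !![a,0,0; 0,b,0; 0,0,c]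

lemma dMat_mul (a b c a' b' c' : ℝ) :
    dMat a b c * dMat a' b' c' = dMat (a * a') (b * b') (c * c') := by
  ext i j
  fin_cases i <;> fin_cases j <;>
    simp [dMat, Matrix.mul_apply, Fin.sum_univ_succ, Matrix.vecHead, Matrix.vecTail]

lemma dMat_one : dMat 1 1 1 = 1 := by
  ext i j
  fin_cases i <;> fin_cases j <;>
    simp [dMat, Matrix.one_apply, Matrix.vecHead, Matrix.vecTail]

lemma dMat_mem (a b c : ℝ) (ha : a = 1 ∨ a = -1) (hb : b = 1 ∨ b = -1)
    (hc : c = 1 ∨ c = -1) (habc : a * b * c = 1) :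
    dMat a b c ∈ Matrix.specialOrthogonalGroup (Fin 3) ℝ := by
  rw [Matrix.mem_specialOrthogonalGroup_iff]
  constructor
  · rw [Matrix.mem_orthogonalGroup_iff]
    ext i j
    fin_cases i <;> fin_cases j <;>
      simp [dMat, Matrix.mul_apply, Fin.sum_univ_succ, Matrix.star_eq_conjTranspose,
        Matrix.conjTranspose_apply, Matrix.one_apply, Matrix.vecHead, Matrix.vecTail] <;>
      rcases ha with rfl | rfl <;> rcases hb with rfl | rfl <;>
        rcases hc with rfl | rfl <;> norm_num
  · simp [dMat, Matrix.det_fin_three]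
    nlinarith [habc]

lemma rho_eq_dMat : (ρ : SO3).1 = dMat 1 (-1) (-1) := rfl

/-- `diag (-1, 1, -1)` as an element of SO(3). -/
def ρ₂ : SO3 := ⟨dMat (-1) 1 (-1), dMat_mem _ _ _ (by norm_num) (by norm_num) (by norm_num) (by norm_num)⟩

/-- `diag (-1, -1, 1)` as an element of SO(3). -/
def ρ₃ : SO3 := ⟨dMat (-1) (-1) 1, dMat_mem _ _ _ (by norm_num) (by norm_num) (by norm_num) (by norm_num)⟩

lemma dprod₂₂ : ρ₂ * ρ₂ = 1 := by
  apply Subtype.ext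
  show dMat (-1) 1 (-1) * dMat (-1) 1 (-1) = 1
  rw [dMat_mul]; norm_num [dMat_one]

lemma dprod₃₃ : ρ₃ * ρ₃ = 1 := by
  apply Subtype.ext
  show dMat (-1) (-1) 1 * dMat (-1) (-1) 1 = 1
  rw [dMat_mul]; norm_num [dMat_one]

lemma dprod₁₂ : ρ * ρ₂ = ρ₃ := by
  apply Subtype.ext
  show dMat 1 (-1) (-1) * dMat (-1) 1 (-1) = dMat (-1) (-1) 1
  rw [dMat_mul]; norm_num

lemma dprod₂₁ : ρ₂ * ρ = ρ₃ := by
  apply Subtype.ext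
  show dMat (-1) 1 (-1) * dMat 1 (-1) (-1) = dMat (-1) (-1) 1
  rw [dMat_mul]; norm_num

lemma dprod₁₃ : ρ * ρ₃ = ρ₂ := by
  apply Subtype.ext
  show dMat 1 (-1) (-1) * dMat (-1) (-1) 1 = dMat (-1) 1 (-1)
  rw [dMat_mul]; norm_num

lemma dprod₃₁ : ρ₃ * ρ = ρ₂ := by
  apply Subtype.ext
  show dMat (-1) (-1) 1 * dMat 1 (-1) (-1) = dMat (-1) 1 (-1)
  rw [dMat_mul]; norm_num

lemma dprod₂₃ : ρ₂ * ρ₃ = ρ := by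
  apply Subtype.ext
  show dMat (-1) 1 (-1) * dMat (-1) (-1) 1 = dMat 1 (-1) (-1)
  rw [dMat_mul]; norm_num

lemma dprod₃₂ : ρ₃ * ρ₂ = ρ := by
  apply Subtype.ext
  show dMat (-1) (-1) 1 * dMat (-1) 1 (-1) = dMat 1 (-1) (-1)
  rw [dMat_mul]; norm_num

/-- The Klein four subgroup `V = {1, diag(1,-1,-1), diag(-1,1,-1), diag(-1,-1,1)}`
of SO(3) (the dihedral subgroup `D₄` of order 4). -/
def V : Subgroup SO3 where
  carrier := {1, ρ, ρ₂, ρ₃}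
  one_mem' := by left; rfl
  mul_mem' := by
    rintro x y (rfl | rfl | rfl | rfl) (rfl | rfl | rfl | rfl) <;>
      simp [Set.mem_insert_iff, one_mul, mul_one, rho_sq, dprod₂₂, dprod₃₃,
        dprod₁₂, dprod₂₁, dprod₁₃, dprod₃₁, dprod₂₃, dprod₃₂]
  inv_mem' := by
    rintro x (rfl | rfl | rfl | rfl) <;>
      simp [Set.mem_insert_iff, rho_inv, inv_eq_of_mul_eq_one_right rho_sq,
        inv_eq_of_mul_eq_one_right dprod₂₂, inv_eq_of_mul_eq_one_right dprod₃₃]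


/- ## Auxiliary development for the Weyl group computation -/

lemma mem_V_iff (x : SO3) : x ∈ V ↔ x = 1 ∨ x = ρ ∨ x = ρ₂ ∨ x = ρ₃ := by
  show x ∈ ({1, ρ, ρ₂, ρ₃} : Set SO3) ↔ _
  simp [Set.mem_insert_iff]

/-- The cyclic permutation matrix. -/
def cMat : Matrix (Fin 3) (Fin 3) ℝ := !![0,0,1; 1,0,0; 0,1,0]

lemma cMat_mem : cMat ∈ Matrix.specialOrthogonalGroup (Fin 3) ℝ := by
  rw [Matrix.mem_specialOrthogonalGroup_iff]
  constructor
  · rw [Matrix.mem_orthogonalGroup_iff]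
    ext i j
    fin_cases i <;> fin_cases j <;>
      simp [cMat, Matrix.mul_apply, Fin.sum_univ_succ, Matrix.star_eq_conjTranspose,
        Matrix.conjTranspose_apply, Matrix.one_apply, Matrix.vecHead, Matrix.vecTail]
  · simp [cMat, Matrix.det_fin_three]

/-- The cyclic axis permutation as an element of SO(3). -/
def cElt : SO3 := ⟨cMat, cMat_mem⟩

/-- Rotation by `π/2` about the z-axis (a signed permutation matrix). -/
def sMat : Matrix (Fin 3) (Fin 3) ℝ := !![0,-1,0; 1,0,0; 0,0,1]

lemma sMat_mem : sMat ∈ Matrix.specialOrthogonalGroup (Fin 3) ℝ := by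
  rw [Matrix.mem_specialOrthogonalGroup_iff]
  constructor
  · rw [Matrix.mem_orthogonalGroup_iff]
    ext i j
    fin_cases i <;> fin_cases j <;>
      simp [sMat, Matrix.mul_apply, Fin.sum_univ_succ, Matrix.star_eq_conjTranspose,
        Matrix.conjTranspose_apply, Matrix.one_apply, Matrix.vecHead, Matrix.vecTail]
  · simp [sMat, Matrix.det_fin_three]

def sElt : SO3 := ⟨sMat, sMat_mem⟩

lemma c_rho : cElt * ρ = ρ₂ * cElt := by
  apply Subtype.ext
  show cMat * dMat 1 (-1) (-1) = dMat (-1) 1 (-1) * cMat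
  ext i j
  fin_cases i <;> fin_cases j <;>
    simp [cMat, dMat, Matrix.mul_apply, Fin.sum_univ_succ, Matrix.vecHead, Matrix.vecTail]

lemma c_rho₂ : cElt * ρ₂ = ρ₃ * cElt := by
  apply Subtype.ext
  show cMat * dMat (-1) 1 (-1) = dMat (-1) (-1) 1 * cMat
  ext i j
  fin_cases i <;> fin_cases j <;>
    simp [cMat, dMat, Matrix.mul_apply, Fin.sum_univ_succ, Matrix.vecHead, Matrix.vecTail]

lemma c_rho₃ : cElt * ρ₃ = ρ * cElt := by
  apply Subtype.ext
  show cMat * dMat (-1) (-1) 1 = dMat 1 (-1) (-1) * cMat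
  ext i j
  fin_cases i <;> fin_cases j <;>
    simp [cMat, dMat, Matrix.mul_apply, Fin.sum_univ_succ, Matrix.vecHead, Matrix.vecTail]

lemma s_rho : sElt * ρ = ρ₂ * sElt := by
  apply Subtype.ext
  show sMat * dMat 1 (-1) (-1) = dMat (-1) 1 (-1) * sMat
  ext i j
  fin_cases i <;> fin_cases j <;>
    simp [sMat, dMat, Matrix.mul_apply, Fin.sum_univ_succ, Matrix.vecHead, Matrix.vecTail]

lemma s_rho₂ : sElt * ρ₂ = ρ * sElt := by
  apply Subtype.ext
  show sMat * dMat (-1) 1 (-1) = dMat 1 (-1) (-1) * sMat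
  ext i j
  fin_cases i <;> fin_cases j <;>
    simp [sMat, dMat, Matrix.mul_apply, Fin.sum_univ_succ, Matrix.vecHead, Matrix.vecTail]

lemma s_rho₃ : sElt * ρ₃ = ρ₃ * sElt := by
  apply Subtype.ext
  show sMat * dMat (-1) (-1) 1 = dMat (-1) (-1) 1 * sMat
  ext i j
  fin_cases i <;> fin_cases j <;>
    simp [sMat, dMat, Matrix.mul_apply, Fin.sum_univ_succ, Matrix.vecHead, Matrix.vecTail]

lemma conj_of_rel {g a b : SO3} (h : g * a = b * g) : g * a * g⁻¹ = b := by
  rw [h, mul_inv_cancel_right]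

lemma conj_inv_of_rel {g a b : SO3} (h : g * a = b * g) : g⁻¹ * b * g = a := by
  rw [mul_assoc, ← h, inv_mul_cancel_left]

/-- Distinctness of the four elements of `V`. -/
lemma dMat_entry_ne {a b c a' b' c' : ℝ} (i : Fin 3)
    (h : dMat a b c = dMat a' b' c') : dMat a b c i i = dMat a' b' c' i i := by rw [h]

lemma rho_ne_one : ρ ≠ 1 := by
  intro h
  have h2 : dMat 1 (-1) (-1) = (1 : Matrix (Fin 3) (Fin 3) ℝ) := by
    rw [← rho_eq_dMat]; exact congrArg Subtype.val h
  have := congrFun (congrFun h2 1) 1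
  simp [dMat, Matrix.one_apply] at this
  norm_num at this

lemma rho₂_ne_one : ρ₂ ≠ 1 := by
  intro h
  have h2 : dMat (-1) 1 (-1) = (1 : Matrix (Fin 3) (Fin 3) ℝ) := congrArg Subtype.val h
  have := congrFun (congrFun h2 0) 0
  simp [dMat, Matrix.one_apply] at this
  norm_num at this

lemma rho₃_ne_one : ρ₃ ≠ 1 := by
  intro h
  have h2 : dMat (-1) (-1) 1 = (1 : Matrix (Fin 3) (Fin 3) ℝ) := congrArg Subtype.val h
  have := congrFun (congrFun h2 0) 0
  simp [dMat, Matrix.one_apply] at this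
  norm_num at this

lemma rho_ne_rho₂ : ρ ≠ ρ₂ := by
  intro h
  have := congrFun (congrFun (congrArg Subtype.val h) 0) 0
  simp [rho_eq_dMat, ρ₂, dMat] at this
  norm_num at this

lemma rho_ne_rho₃ : ρ ≠ ρ₃ := by
  intro h
  have := congrFun (congrFun (congrArg Subtype.val h) 0) 0
  simp [rho_eq_dMat, ρ₃, dMat] at this
  norm_num at this

lemma rho₂_ne_rho₃ : ρ₂ ≠ ρ₃ := by
  intro h
  have := congrFun (congrFun (congrArg Subtype.val h) 1) 1
  simp [ρ₂, ρ₃, dMat] at this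
  norm_num at this

/-- Elements of `V` commute with `ρ`. -/
lemma V_comm_rho {v : SO3} (hv : v ∈ V) : v * ρ = ρ * v := by
  rcases (mem_V_iff v).1 hv with rfl | rfl | rfl | rfl
  · rw [one_mul, mul_one]
  · rfl
  · rw [dprod₂₁, dprod₁₂]
  · rw [dprod₃₁, dprod₁₃]

lemma V_comm_rho₂ {v : SO3} (hv : v ∈ V) : v * ρ₂ = ρ₂ * v := by
  rcases (mem_V_iff v).1 hv with rfl | rfl | rfl | rfl
  · rw [one_mul, mul_one]
  · rw [dprod₁₂, dprod₂₁]
  · rfl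
  · rw [dprod₃₂, dprod₂₃]

/-- Any element of `SO(3)` commuting with both `ρ` and `ρ₂` lies in `V`. -/
lemma centralizer_sub_V (x : SO3) (h1 : x * ρ = ρ * x) (h2 : x * ρ₂ = ρ₂ * x) : x ∈ V := by
  set A := x.1 with hA
  have hm1 : A * dMat 1 (-1) (-1) = dMat 1 (-1) (-1) * A := congrArg Subtype.val h1
  have hm2 : A * dMat (-1) 1 (-1) = dMat (-1) 1 (-1) * A := congrArg Subtype.val h2
  have e01 : A 0 1 = 0 := by
    have := congrFun (congrFun hm1 0) 1
    simp [dMat, Matrix.mul_apply, Fin.sum_univ_succ, Matrix.vecHead, Matrix.vecTail] at this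
    linarith
  have e02 : A 0 2 = 0 := by
    have := congrFun (congrFun hm1 0) 2
    simp [dMat, Matrix.mul_apply, Fin.sum_univ_succ, Matrix.vecHead, Matrix.vecTail] at this
    linarith
  have e10 : A 1 0 = 0 := by
    have := congrFun (congrFun hm1 1) 0
    simp [dMat, Matrix.mul_apply, Fin.sum_univ_succ, Matrix.vecHead, Matrix.vecTail] at this
    linarith
  have e20 : A 2 0 = 0 := by
    have := congrFun (congrFun hm1 2) 0
    simp [dMat, Matrix.mul_apply, Fin.sum_univ_succ, Matrix.vecHead, Matrix.vecTail] at this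
    linarith
  have e12 : A 1 2 = 0 := by
    have := congrFun (congrFun hm2 1) 2
    simp [dMat, Matrix.mul_apply, Fin.sum_univ_succ, Matrix.vecHead, Matrix.vecTail] at this
    linarith
  have e21 : A 2 1 = 0 := by
    have := congrFun (congrFun hm2 2) 1
    simp [dMat, Matrix.mul_apply, Fin.sum_univ_succ, Matrix.vecHead, Matrix.vecTail] at this
    linarith
  have horth : A * star A = 1 := (Matrix.mem_orthogonalGroup_iff _ _).1 x.2.1
  have h00 : A 0 0 * A 0 0 = 1 := by
    have := congrFun (congrFun horth 0) 0
    simp [Matrix.mul_apply, Fin.sum_univ_succ, Matrix.star_eq_conjTranspose,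
      Matrix.conjTranspose_apply, Matrix.one_apply, e01, e02] at this
    linarith
  have h11 : A 1 1 * A 1 1 = 1 := by
    have := congrFun (congrFun horth 1) 1
    simp [Matrix.mul_apply, Fin.sum_univ_succ, Matrix.star_eq_conjTranspose,
      Matrix.conjTranspose_apply, Matrix.one_apply, e10, e12] at this
    linarith
  have h22 : A 2 2 * A 2 2 = 1 := by
    have := congrFun (congrFun horth 2) 2
    simp [Matrix.mul_apply, Fin.sum_univ_succ, Matrix.star_eq_conjTranspose,
      Matrix.conjTranspose_apply, Matrix.one_apply, e20, e21] at this
    linarith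
  have hdet : A 0 0 * A 1 1 * A 2 2 = 1 := by
    have hd : A.det = 1 := x.2.2
    rw [Matrix.det_fin_three] at hd
    rw [e01, e02, e10, e20, e12, e21] at hd
    linarith [hd]
  have hxe : A = dMat (A 0 0) (A 1 1) (A 2 2) := by
    ext i j
    fin_cases i <;> fin_cases j <;>
      simp [dMat, Matrix.vecHead, Matrix.vecTail, e01, e02, e10, e20, e12, e21]
  rw [mem_V_iff]
  rcases mul_self_eq_one_iff.1 h00 with ha | ha <;>
    rcases mul_self_eq_one_iff.1 h11 with hb | hb <;>
      rcases mul_self_eq_one_iff.1 h22 with hc | hc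
  · left; apply Subtype.ext; show A = _; rw [hxe, ha, hb, hc, dMat_one]; rfl
  · rw [ha, hb, hc] at hdet; norm_num at hdet
  · rw [ha, hb, hc] at hdet; norm_num at hdet
  · right; left; apply Subtype.ext; show A = _; rw [hxe, ha, hb, hc]; exact rho_eq_dMat.symm
  · rw [ha, hb, hc] at hdet; norm_num at hdet
  · right; right; left; apply Subtype.ext; show A = _; rw [hxe, ha, hb, hc]; rfl
  · right; right; right; apply Subtype.ext; show A = _; rw [hxe, ha, hb, hc]; rfl
  · rw [ha, hb, hc] at hdet; norm_num at hdet

/-- Helper for normalizer membership. -/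
lemma mem_normalizer_of (g : SO3)
    (h1 : g * ρ * g⁻¹ ∈ V) (h2 : g * ρ₂ * g⁻¹ ∈ V) (h3 : g * ρ₃ * g⁻¹ ∈ V)
    (h1' : g⁻¹ * ρ * g ∈ V) (h2' : g⁻¹ * ρ₂ * g ∈ V) (h3' : g⁻¹ * ρ₃ * g ∈ V) :
    g ∈ Subgroup.normalizer (V : Set SO3) := by
  rw [Subgroup.mem_normalizer_iff]
  intro h
  constructor
  · intro hh
    rcases (mem_V_iff h).1 hh with rfl | rfl | rfl | rfl
    · simpa using V.one_mem
    · exact h1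
    · exact h2
    · exact h3
  · intro hh
    have key : h = g⁻¹ * (g * h * g⁻¹) * g := by group
    rcases (mem_V_iff _).1 hh with hv | hv | hv | hv <;> rw [hv] at key
    · rw [key]; simpa using V.one_mem
    · rw [key]; exact h1'
    · rw [key]; exact h2'
    · rw [key]; exact h3'

lemma c_mem_normalizer : cElt ∈ Subgroup.normalizer (V : Set SO3) := by
  apply mem_normalizer_of
  · rw [conj_of_rel c_rho, mem_V_iff]; tauto
  · rw [conj_of_rel c_rho₂, mem_V_iff]; tauto
  · rw [conj_of_rel c_rho₃, mem_V_iff]; tauto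
  · rw [show (ρ : SO3) = cElt * ρ₃ * cElt⁻¹ from (conj_of_rel c_rho₃).symm]
    rw [show cElt⁻¹ * (cElt * ρ₃ * cElt⁻¹) * cElt = ρ₃ by group, mem_V_iff]; tauto
  · rw [show (ρ₂ : SO3) = cElt * ρ * cElt⁻¹ from (conj_of_rel c_rho).symm]
    rw [show cElt⁻¹ * (cElt * ρ * cElt⁻¹) * cElt = ρ by group, mem_V_iff]; tauto
  · rw [show (ρ₃ : SO3) = cElt * ρ₂ * cElt⁻¹ from (conj_of_rel c_rho₂).symm]
    rw [show cElt⁻¹ * (cElt * ρ₂ * cElt⁻¹) * cElt = ρ₂ by group, mem_V_iff]; tauto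

lemma s_mem_normalizer : sElt ∈ Subgroup.normalizer (V : Set SO3) := by
  apply mem_normalizer_of
  · rw [conj_of_rel s_rho, mem_V_iff]; tauto
  · rw [conj_of_rel s_rho₂, mem_V_iff]; tauto
  · rw [conj_of_rel s_rho₃, mem_V_iff]; tauto
  · rw [show (ρ : SO3) = sElt * ρ₂ * sElt⁻¹ from (conj_of_rel s_rho₂).symm]
    rw [show sElt⁻¹ * (sElt * ρ₂ * sElt⁻¹) * sElt = ρ₂ by group, mem_V_iff]; tauto
  · rw [show (ρ₂ : SO3) = sElt * ρ * sElt⁻¹ from (conj_of_rel s_rho).symm]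
    rw [show sElt⁻¹ * (sElt * ρ * sElt⁻¹) * sElt = ρ by group, mem_V_iff]; tauto
  · rw [show (ρ₃ : SO3) = sElt * ρ₃ * sElt⁻¹ from (conj_of_rel s_rho₃).symm]
    rw [show sElt⁻¹ * (sElt * ρ₃ * sElt⁻¹) * sElt = ρ₃ by group, mem_V_iff]; tauto


/- ## Conjugation data and the six coset representatives -/

lemma conj_comp (g h a : SO3) : (g * h) * a * (g * h)⁻¹ = g * (h * a * h⁻¹) * g⁻¹ := by
  group

lemma conj2_rho : (cElt * cElt) * ρ * (cElt * cElt)⁻¹ = ρ₃ := by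
  rw [conj_comp, conj_of_rel c_rho, conj_of_rel c_rho₂]

lemma conj2_rho₂ : (cElt * cElt) * ρ₂ * (cElt * cElt)⁻¹ = ρ := by
  rw [conj_comp, conj_of_rel c_rho₂, conj_of_rel c_rho₃]

lemma conj_cs_rho : (cElt * sElt) * ρ * (cElt * sElt)⁻¹ = ρ₃ := by
  rw [conj_comp, conj_of_rel s_rho, conj_of_rel c_rho₂]

lemma conj_cs_rho₂ : (cElt * sElt) * ρ₂ * (cElt * sElt)⁻¹ = ρ₂ := by
  rw [conj_comp, conj_of_rel s_rho₂, conj_of_rel c_rho]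

lemma conj_ccs_rho : (cElt * cElt * sElt) * ρ * (cElt * cElt * sElt)⁻¹ = ρ := by
  rw [conj_comp, conj_of_rel s_rho, conj2_rho₂]

lemma conj_ccs_rho₂ : (cElt * cElt * sElt) * ρ₂ * (cElt * cElt * sElt)⁻¹ = ρ₃ := by
  rw [conj_comp, conj_of_rel s_rho₂, conj2_rho]

/-- The six coset representatives in the normalizer. -/
def w : Fin 6 → Subgroup.normalizer (V : Set SO3) :=
  ![⟨1, Subgroup.one_mem _⟩,
    ⟨cElt, c_mem_normalizer⟩,
    ⟨cElt * cElt, mul_mem c_mem_normalizer c_mem_normalizer⟩,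
    ⟨sElt, s_mem_normalizer⟩,
    ⟨cElt * sElt, mul_mem c_mem_normalizer s_mem_normalizer⟩,
    ⟨cElt * cElt * sElt, mul_mem (mul_mem c_mem_normalizer c_mem_normalizer) s_mem_normalizer⟩]

/-- The table of conjugation actions of the six representatives on `(ρ, ρ₂)`. -/
def pTab : Fin 6 → SO3 × SO3 :=
  ![(ρ, ρ₂), (ρ₂, ρ₃), (ρ₃, ρ), (ρ₂, ρ), (ρ₃, ρ₂), (ρ, ρ₃)]

lemma psi_w (i : Fin 6) :
    ((w i : SO3) * ρ * (w i : SO3)⁻¹, (w i : SO3) * ρ₂ * (w i : SO3)⁻¹) = pTab i := by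
  fin_cases i
  · show ((1 : SO3) * ρ * (1 : SO3)⁻¹, (1 : SO3) * ρ₂ * (1 : SO3)⁻¹) = (ρ, ρ₂)
    rw [inv_one, one_mul, one_mul, mul_one, mul_one]
  · show (cElt * ρ * cElt⁻¹, cElt * ρ₂ * cElt⁻¹) = (ρ₂, ρ₃)
    rw [conj_of_rel c_rho, conj_of_rel c_rho₂]
  · show ((cElt * cElt) * ρ * (cElt * cElt)⁻¹, (cElt * cElt) * ρ₂ * (cElt * cElt)⁻¹) = (ρ₃, ρ)
    rw [conj2_rho, conj2_rho₂]
  · show (sElt * ρ * sElt⁻¹, sElt * ρ₂ * sElt⁻¹) = (ρ₂, ρ)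
    rw [conj_of_rel s_rho, conj_of_rel s_rho₂]
  · show ((cElt * sElt) * ρ * (cElt * sElt)⁻¹, (cElt * sElt) * ρ₂ * (cElt * sElt)⁻¹) = (ρ₃, ρ₂)
    rw [conj_cs_rho, conj_cs_rho₂]
  · show ((cElt * cElt * sElt) * ρ * (cElt * cElt * sElt)⁻¹,
        (cElt * cElt * sElt) * ρ₂ * (cElt * cElt * sElt)⁻¹) = (ρ, ρ₃)
    rw [conj_ccs_rho, conj_ccs_rho₂]

lemma pTab_ne_aux {x y : SO3} (h00 : (x : Matrix (Fin 3) (Fin 3) ℝ) 0 0 ≠ (y : Matrix (Fin 3) (Fin 3) ℝ) 0 0) : x ≠ y :=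
  fun h => h00 (by rw [h])

lemma pTab_ne_aux' {x y : SO3} (h11 : (x : Matrix (Fin 3) (Fin 3) ℝ) 1 1 ≠ (y : Matrix (Fin 3) (Fin 3) ℝ) 1 1) : x ≠ y :=
  fun h => h11 (by rw [h])

lemma rho_entries : (ρ : Matrix (Fin 3) (Fin 3) ℝ) 0 0 = 1 ∧ (ρ : Matrix (Fin 3) (Fin 3) ℝ) 1 1 = -1 := by
  constructor <;> rw [rho_eq_dMat] <;> simp [dMat]

lemma rho₂_entries : (ρ₂ : Matrix (Fin 3) (Fin 3) ℝ) 0 0 = -1 ∧ (ρ₂ : Matrix (Fin 3) (Fin 3) ℝ) 1 1 = 1 := by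
  constructor <;> show dMat (-1) 1 (-1) _ _ = _ <;> simp [dMat]

lemma rho₃_entries : (ρ₃ : Matrix (Fin 3) (Fin 3) ℝ) 0 0 = -1 ∧ (ρ₃ : Matrix (Fin 3) (Fin 3) ℝ) 1 1 = -1 := by
  constructor <;> show dMat (-1) (-1) 1 _ _ = _ <;> simp [dMat]

lemma ne12 : ρ ≠ ρ₂ := pTab_ne_aux (by rw [rho_entries.1, rho₂_entries.1]; norm_num)
lemma ne13 : ρ ≠ ρ₃ := pTab_ne_aux (by rw [rho_entries.1, rho₃_entries.1]; norm_num)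
lemma ne23 : ρ₂ ≠ ρ₃ := pTab_ne_aux' (by rw [rho₂_entries.2, rho₃_entries.2]; norm_num)

lemma pTab_inj : Function.Injective pTab := by
  have d12 := ne12; have d13 := ne13; have d23 := ne23
  intro i j h
  fin_cases i <;> fin_cases j <;>
    first
      | rfl
      | (exfalso
         have h1 : (pTab _).1 = (pTab _).1 := congrArg Prod.fst h
         have h2 : (pTab _).2 = (pTab _).2 := congrArg Prod.snd h
         simp only [pTab, Matrix.cons_val_zero, Matrix.cons_val_one, Matrix.head_cons,
           Matrix.cons_val_two, Matrix.tail_cons, Matrix.cons_val_three,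
           Matrix.cons_val_four] at h1 h2
         first
           | exact d12 h1 | exact d12 h1.symm | exact d13 h1 | exact d13 h1.symm
           | exact d23 h1 | exact d23 h1.symm
           | exact d12 h2 | exact d12 h2.symm | exact d13 h2 | exact d13 h2.symm
           | exact d23 h2 | exact d23 h2.symm)

/-- ψ is constant on right cosets of `V`. -/
lemma psi_coset (g t : SO3) (ht : t ∈ V) :
    ((g * t) * ρ * (g * t)⁻¹, (g * t) * ρ₂ * (g * t)⁻¹) = (g * ρ * g⁻¹, g * ρ₂ * g⁻¹) := by
  rw [conj_comp, conj_comp, conj_of_rel (V_comm_rho ht), conj_of_rel (V_comm_rho₂ ht)]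

/-- If `g` and `u` have the same conjugation action on `ρ` and `ρ₂`, they lie in the
same coset of `V`. -/
lemma coset_eq_of_conj (u g : SO3) (h1 : g * ρ * g⁻¹ = u * ρ * u⁻¹)
    (h2 : g * ρ₂ * g⁻¹ = u * ρ₂ * u⁻¹) : u⁻¹ * g ∈ V := by
  apply centralizer_sub_V
  · have e1 : (u⁻¹ * g) * ρ * (u⁻¹ * g)⁻¹ = ρ := by
      rw [conj_comp, h1]
      group
    exact mul_inv_eq_iff_eq_mul.1 e1
  · have e2 : (u⁻¹ * g) * ρ₂ * (u⁻¹ * g)⁻¹ = ρ₂ := by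
      rw [conj_comp, h2]
      group
    exact mul_inv_eq_iff_eq_mul.1 e2


/-- The Weyl group `N_{SO(3)}(V) / V` of the Klein four subgroup `V` in `SO(3)` has
order 6. -/
theorem weyl_group_V_order_six :
    Nat.card ((Subgroup.normalizer (V : Set SO3)) ⧸ V.subgroupOf (Subgroup.normalizer (V : Set SO3))) = 6 := by
  have hbij : Function.Bijective
      (fun i : Fin 6 => (QuotientGroup.mk (w i) : Subgroup.normalizer (V : Set SO3) ⧸ V.subgroupOf (Subgroup.normalizer (V : Set SO3)))) := by
    constructor
    · intro i j hij
      apply pTab_inj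
      rw [← psi_w i, ← psi_w j]
      -- from coset equality, extract the element of V
      rw [QuotientGroup.eq] at hij
      rw [Subgroup.mem_subgroupOf] at hij
      have hcoe : (((w i)⁻¹ * w j : Subgroup.normalizer (V : Set SO3)) : SO3) = (w i : SO3)⁻¹ * (w j : SO3) := rfl
      rw [hcoe] at hij
      have hj : (w j : SO3) = (w i : SO3) * ((w i : SO3)⁻¹ * (w j : SO3)) := by group
      rw [hj, psi_coset _ _ hij]
    · intro q
      induction q using QuotientGroup.induction_on with
      | H n =>
        obtain ⟨g, hg⟩ := n
        have hρV : g * ρ * g⁻¹ ∈ V :=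
          (Subgroup.mem_normalizer_iff.1 hg ρ).1 ((mem_V_iff ρ).2 (by tauto))
        have hρ₂V : g * ρ₂ * g⁻¹ ∈ V :=
          (Subgroup.mem_normalizer_iff.1 hg ρ₂).1 ((mem_V_iff ρ₂).2 (by tauto))
        have hane : g * ρ * g⁻¹ ≠ 1 := by
          intro h
          exact rho_ne_one (by
            have : ρ = g⁻¹ * (g * ρ * g⁻¹) * g := by group
            rw [this, h]; group)
        have hbne : g * ρ₂ * g⁻¹ ≠ 1 := by
          intro h
          exact rho₂_ne_one (by
            have : ρ₂ = g⁻¹ * (g * ρ₂ * g⁻¹) * g := by group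
            rw [this, h]; group)
        have hab : g * ρ * g⁻¹ ≠ g * ρ₂ * g⁻¹ := by
          intro h
          exact rho_ne_rho₂ (mul_left_cancel (mul_right_cancel h))
        -- helper to conclude in each case
        have finish : ∀ i : Fin 6, (g * ρ * g⁻¹, g * ρ₂ * g⁻¹) = pTab i →
            (QuotientGroup.mk (w i) : Subgroup.normalizer (V : Set SO3) ⧸ V.subgroupOf (Subgroup.normalizer (V : Set SO3))) =
              QuotientGroup.mk ⟨g, hg⟩ := by
          intro i hp
          rw [QuotientGroup.eq]
          rw [Subgroup.mem_subgroupOf]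
          have hcoe : (((w i)⁻¹ * ⟨g, hg⟩ : Subgroup.normalizer (V : Set SO3)) : SO3) = (w i : SO3)⁻¹ * g := rfl
          rw [hcoe]
          have hpw := psi_w i
          rw [← hp] at hpw
          exact coset_eq_of_conj _ _ (congrArg Prod.fst hpw).symm (congrArg Prod.snd hpw).symm
        rcases (mem_V_iff _).1 hρV with ha | ha | ha | ha <;>
          rcases (mem_V_iff _).1 hρ₂V with hb | hb | hb | hb
        · exact absurd ha hane
        · exact absurd ha hane
        · exact absurd ha hane
        · exact absurd ha hane
        · exact absurd hb hbne
        · exact absurd (ha.trans hb.symm) hab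
        · exact ⟨0, finish 0 (by rw [ha, hb]; rfl)⟩
        · exact ⟨5, finish 5 (by rw [ha, hb]; rfl)⟩
        · exact absurd hb hbne
        · exact ⟨3, finish 3 (by rw [ha, hb]; rfl)⟩
        · exact absurd (ha.trans hb.symm) hab
        · exact ⟨1, finish 1 (by rw [ha, hb]; rfl)⟩
        · exact absurd hb hbne
        · exact ⟨2, finish 2 (by rw [ha, hb]; rfl)⟩
        · exact ⟨4, finish 4 (by rw [ha, hb]; rfl)⟩
        · exact absurd (ha.trans hb.symm) hab
  have := Nat.card_eq_of_bijective _ hbij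
  simpa using this.symm

end
end
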